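/- (Theorem: derivative ratio for DPO) Fix β > 0 and define the pointwise DPO loss L(x₁, x₂) = −log σ(β (log x₁ − log x₂)) for x₁, x₂ > 0, where σ is the logistic sigmoid. Then for all x₁, x₂ > 0, the partial derivative ∂L/∂x₂ is nonzero and |(∂L/∂x₁) / (∂L/∂x₂)| = x₂/x₁; in particular, if 0 < x₂ < x₁ then this ratio is strictly less than 1. -/
import Mathlib


/-- Theorem: derivative ratio for DPO: For the pointwise DPO loss
`L(x₁,x₂) = −log σ(β(log x₁ − log x₂))`, the partial derivative in `x₂` is nonzero,
the absolute ratio of partial derivatives equals `x₂/x₁`, and it is `< 1` when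
`0 < x₂ < x₁`. -/
theorem dpo_derivative_ratio (β : ℝ) (hβ : 0 < β)
    (σ : ℝ → ℝ) (hσ : ∀ u, σ u = 1 / (1 + Real.exp (-u)))
    (L : ℝ → ℝ → ℝ)
    (hL : ∀ x1 x2, L x1 x2 = - Real.log (σ (β * (Real.log x1 - Real.log x2))))
    (x1 x2 : ℝ) (hx1 : 0 < x1) (hx2 : 0 < x2) :
    deriv (fun t => L x1 t) x2 ≠ 0 ∧
    |deriv (fun t => L t x2) x1 / deriv (fun t => L x1 t) x2| = x2 / x1 ∧
    (x2 < x1 →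
      |deriv (fun t => L t x2) x1 / deriv (fun t => L x1 t) x2| < 1) := by
  have hL' : ∀ a b : ℝ, L a b = Real.log (1 + Real.exp (β * (Real.log b - Real.log a))) := by
    intro a b
    rw [hL, hσ, one_div, Real.log_inv, neg_neg]
    congr 1
    ring_nf
  set v : ℝ := β * (Real.log x2 - Real.log x1) with hv
  have hEpos : 0 < Real.exp v := Real.exp_pos v
  have hDpos : 0 < 1 + Real.exp v := by linarith
  -- derivative in x2
  have hEq2 : (fun t => L x1 t) = (fun t => Real.log (1 + Real.exp (β * (Real.log t - Real.log x1)))) := by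
    funext t; exact hL' x1 t
  have h2 : HasDerivAt (fun t => Real.log (1 + Real.exp (β * (Real.log t - Real.log x1))))
      (Real.exp v * (β * x2⁻¹) / (1 + Real.exp v)) x2 := by
    have hlog : HasDerivAt Real.log x2⁻¹ x2 := Real.hasDerivAt_log hx2.ne'
    have hinner : HasDerivAt (fun t => β * (Real.log t - Real.log x1)) (β * x2⁻¹) x2 :=
      (hlog.sub_const _).const_mul β
    have hexp := hinner.exp
    have hsum := hexp.const_add 1
    have := hsum.log (by simpa using hDpos.ne')
    simpa using this
  -- derivative in x1
  have hEq1 : (fun t => L t x2) = (fun t => Real.log (1 + Real.exp (β * (Real.log x2 - Real.log t)))) := by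
    funext t; exact hL' t x2
  have h1 : HasDerivAt (fun t => Real.log (1 + Real.exp (β * (Real.log x2 - Real.log t))))
      (Real.exp v * (β * -x1⁻¹) / (1 + Real.exp v)) x1 := by
    have hlog : HasDerivAt Real.log x1⁻¹ x1 := Real.hasDerivAt_log hx1.ne'
    have hinner : HasDerivAt (fun t => β * (Real.log x2 - Real.log t)) (β * -x1⁻¹) x1 := by
      simpa using (hlog.const_sub (Real.log x2)).const_mul β
    have hexp := hinner.exp
    have hsum := hexp.const_add 1
    have := hsum.log (by simpa using hDpos.ne')
    simpa using this
  have hd2 : deriv (fun t => L x1 t) x2 = Real.exp v * (β * x2⁻¹) / (1 + Real.exp v) := by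
    rw [hEq2]; exact h2.deriv
  have hd1 : deriv (fun t => L t x2) x1 = Real.exp v * (β * -x1⁻¹) / (1 + Real.exp v) := by
    rw [hEq1]; exact h1.deriv
  have hd2pos : 0 < deriv (fun t => L x1 t) x2 := by
    rw [hd2]; positivity
  have hratio : deriv (fun t => L t x2) x1 / deriv (fun t => L x1 t) x2 = -(x2 / x1) := by
    rw [hd1, hd2]
    field_simp
  refine ⟨hd2pos.ne', ?_, ?_⟩
  · rw [hratio, abs_neg, abs_of_pos (div_pos hx2 hx1)]
  · intro hlt
    rw [hratio, abs_neg, abs_of_pos (div_pos hx2 hx1)]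
    exact (div_lt_one hx1).mpr hlt
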